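/- arXiv:2411.18366 — 3 statements merged into one kernel-verified Lean document; each statement's English description precedes it below -/
import Mathlib

section
/- Let f = a_0 + a_1x + ⋯ + a_nx^n ∈ ℤ[x] with a_0 a_n ≠ 0, and set H_f = max_{0 ≤ i ≤ n−1} |a_i|/|a_n|. Suppose there exist natural numbers m, d, k, and j with 1 ≤ j ≤ n, and a prime p not dividing d, such that m ≥ H_f + d + 1, |f(m)|/d = p^k, and p does not divide the integer f^{(j)}(m)/j!. Then in any factorization f = c·f_1⋯f_r where c is a nonzero integer and each f_i is a nonconstant irreducible polynomial in ℤ[x], the number of factors satisfies r ≤ min{k, j}. -/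
open Polynomial

noncomputable def Complex.abs : AbsoluteValue ℂ ℝ := IsAbsoluteValue.toAbsoluteValue (norm : ℂ → ℝ)

lemma Complex.norm_eq_abs (z : ℂ) : ‖z‖ = Complex.abs z := rfl

@[simp]
lemma Complex.abs_intCast (n : ℤ) : Complex.abs (n : ℂ) = |(n : ℝ)| := by
  rw [← Complex.norm_eq_abs, Complex.norm_intCast]

lemma cauchy_aux' (f : Polynomial ℤ) (n : ℕ) (hn : 1 ≤ n) (hdeg : f.natDegree = n)
    (H : ℝ) (hH : 0 ≤ H)
    (hcoef : ∀ i < n, |(f.coeff i : ℝ)| ≤ H * |(f.coeff n : ℝ)|)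
    (z : ℂ) (hz : (f.map (Int.castRingHom ℂ)).eval z = 0) : Complex.abs z < H + 1 := by
  by_contra hcon
  push_neg at hcon
  set zn := Complex.abs z with hzn
  have hzn1 : (1:ℝ) ≤ zn := by linarith
  have hf0 : f ≠ 0 := fun h => by simp [h] at hdeg; omega
  have hA : (1:ℝ) ≤ |(f.coeff n : ℝ)| := by
    have : f.coeff n ≠ 0 := by
      rw [← hdeg]; exact Polynomial.leadingCoeff_ne_zero.mpr hf0
    rw [← Int.cast_abs]
    exact_mod_cast Int.one_le_abs (by simpa using this)
  set A := |(f.coeff n : ℝ)| with hAdef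
  rw [Polynomial.eval_map, Polynomial.eval₂_eq_sum_range, hdeg] at hz
  rw [Finset.sum_range_succ] at hz
  have key : A * zn ^ n ≤ H * A * ∑ i ∈ Finset.range n, zn ^ i := by
    have h1 : Complex.abs ((Int.castRingHom ℂ) (f.coeff n) * z ^ n)
        = Complex.abs (∑ i ∈ Finset.range n, (Int.castRingHom ℂ) (f.coeff i) * z ^ i) := by
      have : (Int.castRingHom ℂ) (f.coeff n) * z ^ n
          = -(∑ i ∈ Finset.range n, (Int.castRingHom ℂ) (f.coeff i) * z ^ i) := by
        linear_combination hz
      rw [this, map_neg_eq_map]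
    rw [map_mul, map_pow] at h1
    have h2 : Complex.abs (∑ i ∈ Finset.range n, (Int.castRingHom ℂ) (f.coeff i) * z ^ i)
        ≤ ∑ i ∈ Finset.range n, H * A * zn ^ i := by
      rw [← Complex.norm_eq_abs]
      refine le_trans (norm_sum_le _ _) (Finset.sum_le_sum fun i hi => ?_)
      rw [norm_mul, norm_pow, Complex.norm_eq_abs, Complex.norm_eq_abs, ← hzn]
      have : Complex.abs ((Int.castRingHom ℂ) (f.coeff i)) = |(f.coeff i : ℝ)| := by
        simp [Complex.abs_intCast]
      rw [this]
      have hb := hcoef i (Finset.mem_range.mp hi)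
      have : (0:ℝ) ≤ zn ^ i := pow_nonneg (by positivity) i
      nlinarith
    calc A * zn ^ n = Complex.abs ((Int.castRingHom ℂ) (f.coeff n)) * Complex.abs z ^ n := by
          simp [hAdef, Complex.abs_intCast, hzn]
      _ ≤ ∑ i ∈ Finset.range n, H * A * zn ^ i := h1 ▸ h2
      _ = H * A * ∑ i ∈ Finset.range n, zn ^ i := by rw [← Finset.mul_sum]
  set S := ∑ i ∈ Finset.range n, zn ^ i with hS
  have hgeom : S * (zn - 1) = zn ^ n - 1 := geom_sum_mul zn n
  have hSnn : 0 ≤ S := Finset.sum_nonneg fun i _ => pow_nonneg (by linarith) i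
  have hznn : (1:ℝ) ≤ zn ^ n := one_le_pow₀ hzn1
  rcases eq_or_lt_of_le hzn1 with heq | hlt
  · have hH0 : H = 0 := by linarith
    rw [hH0, ← heq] at key
    simp at key
    nlinarith
  · have hpos := sub_pos.mpr hlt
    have h3 := mul_le_mul_of_nonneg_right key hpos.le
    have h4 : H * A * S * (zn - 1) = H * A * (zn ^ n - 1) := by
      rw [mul_assoc (H * A), hgeom]
    rw [h4] at h3
    have hHle : H ≤ zn - 1 := by linarith
    have h5 : H * A * (zn ^ n - 1) ≤ (zn - 1) * (A * (zn ^ n - 1)) := by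
      have h6 : 0 ≤ A * (zn ^ n - 1) := by nlinarith
      nlinarith
    nlinarith

lemma multiset_prod_gt (s : Multiset ℝ) (d : ℝ) (hd : 1 ≤ d) (hcard : 0 < Multiset.card s)
    (h : ∀ x ∈ s, d < x) : d < s.prod := by
  obtain ⟨x, hx⟩ := Multiset.card_pos_iff_exists_mem.mp hcard
  obtain ⟨t, rfl⟩ : ∃ t, s = x ::ₘ t := ⟨s.erase x, (Multiset.cons_erase hx).symm⟩
  rw [Multiset.prod_cons]
  have hxd : d < x := h x (Multiset.mem_cons_self x t)
  have ht : (1:ℝ) ≤ t.prod :=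
    Multiset.one_le_prod fun y hy => le_trans hd (h y (Multiset.mem_cons_of_mem hy)).le
  nlinarith

lemma eval_bound (f g : Polynomial ℤ) (n : ℕ) (hn : 1 ≤ n) (hdeg : f.natDegree = n)
    (H : ℝ) (hH : 0 ≤ H)
    (hcoef : ∀ i < n, |(f.coeff i : ℝ)| ≤ H * |(f.coeff n : ℝ)|)
    (hdvd : g ∣ f) (hgdeg : 1 ≤ g.natDegree)
    (d : ℕ) (hd : 1 ≤ d) (M : ℤ) (hM : H + d + 1 ≤ (M : ℝ)) :
    (d : ℝ) < |((g.eval M : ℤ) : ℝ)| := by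
  have hf0 : f ≠ 0 := fun h => by simp [h] at hdeg; omega
  have hg0 : g ≠ 0 := fun h => by simp [h] at hgdeg
  set φ := Int.castRingHom ℂ with hφ
  have hinj : Function.Injective φ := fun a b h => by simpa using h
  set gC := g.map φ with hgC
  have hgC0 : gC ≠ 0 := (Polynomial.map_ne_zero_iff hinj).mpr hg0
  have hsplits : gC.Splits := IsAlgClosed.splits gC
  have hroots : ∀ α ∈ gC.roots, Complex.abs α < H + 1 := by
    intro α hα
    have h1 : gC.eval α = 0 := (Polynomial.mem_roots hgC0).mp hα
    have h2 : (f.map φ).eval α = 0 := by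
      obtain ⟨q, rfl⟩ := hdvd
      rw [Polynomial.map_mul, Polynomial.eval_mul, h1, zero_mul]
    exact cauchy_aux' f n hn hdeg H hH hcoef α h2
  have hprod := hsplits.eq_prod_roots
  have hcard : Multiset.card gC.roots = g.natDegree := by
    rw [Polynomial.splits_iff_card_roots.mp hsplits]
    exact Polynomial.natDegree_map_eq_of_injective hinj g
  have heval : gC.eval (M : ℂ) = ((g.eval M : ℤ) : ℂ) := by
    rw [hgC, Polynomial.eval_intCast_map]; rfl
  have hlc : (1:ℝ) ≤ Complex.abs gC.leadingCoeff := by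
    have h3 : gC.leadingCoeff = ((g.leadingCoeff : ℤ) : ℂ) := by
      rw [hgC, Polynomial.leadingCoeff_map_of_leadingCoeff_ne_zero]
      · rfl
      · simpa using Polynomial.leadingCoeff_ne_zero.mpr hg0
    rw [h3, ← Complex.norm_eq_abs, Complex.norm_intCast, ← Int.cast_abs]
    exact_mod_cast Int.one_le_abs (Polynomial.leadingCoeff_ne_zero.mpr hg0)
  have heval2 : gC.eval (M:ℂ) = gC.leadingCoeff * (gC.roots.map (fun a => (M:ℂ) - a)).prod := by
    conv_lhs => rw [hprod]
    rw [Polynomial.eval_mul, Polynomial.eval_C, Polynomial.eval_multiset_prod,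
      Multiset.map_map]
    simp [Function.comp]
  have habs : Complex.abs (gC.eval (M:ℂ))
      = Complex.abs gC.leadingCoeff * ((gC.roots.map fun a => Complex.abs ((M:ℂ) - a)).prod) := by
    rw [heval2, map_mul, map_multiset_prod, Multiset.map_map]
    rfl
  have hMpos : (0:ℝ) < (M:ℝ) := by
    have hd1 : (1:ℝ) ≤ (d:ℝ) := by exact_mod_cast hd
    linarith
  have hMabs : Complex.abs ((M:ℤ):ℂ) = (M:ℝ) := by
    rw [← Complex.norm_eq_abs, Complex.norm_intCast]
    exact abs_of_pos (by exact_mod_cast hMpos)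
  have hterm : ∀ x ∈ gC.roots.map fun a => Complex.abs ((M:ℂ) - a), (d:ℝ) < x := by
    intro x hx
    obtain ⟨a, ha, rfl⟩ := Multiset.mem_map.mp hx
    have h4 : Complex.abs ((M:ℂ)) - Complex.abs a ≤ Complex.abs ((M:ℂ) - a) :=
      Complex.abs.le_sub _ _
    have h5 := hroots a ha
    have : Complex.abs ((M:ℂ)) = (M:ℝ) := by exact_mod_cast hMabs
    linarith
  have hprodgt : (d:ℝ) < ((gC.roots.map fun a => Complex.abs ((M:ℂ) - a)).prod) := by
    refine multiset_prod_gt _ _ (by exact_mod_cast hd) ?_ hterm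
    rw [Multiset.card_map, hcard]; omega
  have hfinal : (d:ℝ) < Complex.abs (gC.eval (M:ℂ)) := by
    rw [habs]
    have hd1 : (1:ℝ) ≤ (d:ℝ) := by exact_mod_cast hd
    nlinarith [hprodgt, hlc]
  rw [heval, ← Complex.norm_eq_abs, Complex.norm_intCast] at hfinal
  exact hfinal

lemma hasse_dvd_aux {ι : Type*} (P : ℤ) (M : ℤ) (s : Finset ι) (g : ι → Polynomial ℤ)
    (hdvd : ∀ i ∈ s, P ∣ (g i).eval M) :
    ∀ t, t < s.card → P ∣ ((Polynomial.hasseDeriv t (∏ i ∈ s, g i)).eval M) := by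
  induction s using Finset.cons_induction with
  | empty => intro t ht; simp at ht
  | cons a s ha ih =>
    intro t ht
    rw [Finset.prod_cons, Polynomial.hasseDeriv_mul, Polynomial.eval_finset_sum]
    apply Finset.dvd_sum
    intro x hx
    rw [Polynomial.eval_mul]
    rcases Nat.eq_zero_or_pos x.1 with h1 | h1
    · have h2 : P ∣ (Polynomial.hasseDeriv x.1 (g a)).eval M := by
        rw [h1, Polynomial.hasseDeriv_zero']
        exact hdvd a (Finset.mem_cons_self a s)
      exact h2.mul_right _
    · have hx2 : x.2 < s.card := by
        have h3 := Finset.HasAntidiagonal.mem_antidiagonal.mp hx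
        rw [Finset.card_cons] at ht
        omega
      exact (ih (fun i hi => hdvd i (Finset.mem_cons_of_mem hi)) x.2 hx2).mul_left _

/-- If `m ≥ H_f + d + 1`, `|f(m)|/d = p^k` with `p ∤ d` prime, and `p` does not
divide the `j`-th Hasse derivative of `f` at `m` (i.e. `f⁽ʲ⁾(m)/j!`), then any factorization of
`f` into nonconstant irreducibles in `ℤ[x]` has at most `min k j` factors. -/
theorem stmt_2 (f : Polynomial ℤ) (n : ℕ) (hn : 1 ≤ n) (hdeg : f.natDegree = n)
    (h0 : f.coeff 0 ≠ 0)
    (m d k j : ℕ) (hm : 0 < m) (hd : 0 < d) (hk : 0 < k) (hj : 1 ≤ j) (hjn : j ≤ n)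
    (p : ℕ) (hp : p.Prime) (hpd : ¬ (p ∣ d))
    (hmd : ((Finset.range n).sup' (Finset.nonempty_range_iff.mpr (by omega))
        (fun i => (|f.coeff i| : ℝ) / |f.coeff n|)) + d + 1 ≤ (m : ℝ))
    (hval : (f.eval (m : ℤ)).natAbs = d * p ^ k)
    (hcoprime : ¬ ((p : ℤ) ∣ (Polynomial.hasseDeriv j f).eval (m : ℤ)))
    (c : ℤ) (hc : c ≠ 0) (r : ℕ) (fs : Fin r → Polynomial ℤ)
    (hirr : ∀ i, Irreducible (fs i)) (hnc : ∀ i, 0 < (fs i).natDegree)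
    (hfact : f = C c * ∏ i, fs i) :
    r ≤ min k j := by
  have hf0 : f ≠ 0 := fun h => by simp [h] at h0
  have hne : (Finset.range n).Nonempty := Finset.nonempty_range_iff.mpr (by omega)
  set H : ℝ := (Finset.range n).sup' hne (fun i => (|f.coeff i| : ℝ) / |f.coeff n|) with hHdef
  have hmd' : H + d + 1 ≤ (m : ℝ) := by
    convert hmd using 3
  have hanne : f.coeff n ≠ 0 := by
    rw [← hdeg]; exact Polynomial.leadingCoeff_ne_zero.mpr hf0
  have hanpos : (0:ℝ) < |(f.coeff n : ℝ)| := abs_pos.mpr (Int.cast_ne_zero.mpr hanne)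
  have hH0 : 0 ≤ H := by
    refine le_trans ?_ (Finset.le_sup' _ (Finset.mem_range.mpr (show 0 < n by omega)))
    positivity
  have hcoef : ∀ i < n, |(f.coeff i : ℝ)| ≤ H * |(f.coeff n : ℝ)| := by
    intro i hi
    have h1 := Finset.le_sup' (fun i => (|f.coeff i| : ℝ) / |f.coeff n|)
      (Finset.mem_range.mpr hi)
    rw [← hHdef, Int.cast_abs, div_le_iff₀ hanpos] at h1
    exact h1
  set M : ℤ := (m : ℤ) with hM
  -- each factor divides f
  have hdvdf : ∀ i : Fin r, fs i ∣ f := fun i =>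
    dvd_trans (Finset.dvd_prod_of_mem fs (Finset.mem_univ i)) ⟨C c, by rw [hfact]; ring⟩
  -- natAbs values
  set N : Fin r → ℕ := fun i => ((fs i).eval M).natAbs with hN
  have hNgt : ∀ i, d < N i := by
    intro i
    have h1 := eval_bound f (fs i) n hn hdeg H hH0 hcoef (hdvdf i) (hnc i) d hd M hmd'
    have h2 : |(((fs i).eval M : ℤ) : ℝ)| = ((N i : ℕ) : ℝ) := by
      rw [hN]
      rw [Nat.cast_natAbs, Int.cast_abs]
    rw [h2] at h1
    exact_mod_cast h1
  -- product identity
  have hprodN : c.natAbs * ∏ i, N i = d * p ^ k := by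
    have h1 : f.eval M = c * ∏ i, (fs i).eval M := by
      rw [hfact, Polynomial.eval_mul, Polynomial.eval_C, Polynomial.eval_prod]
    have h2 : (f.eval M).natAbs = c.natAbs * ∏ i, N i := by
      rw [h1, Int.natAbs_mul]
      congr 1
      exact map_prod Int.natAbsHom _ _
    rw [← h2, ← hval]
  -- p ∣ N i
  have hpN : ∀ i, p ∣ N i := by
    intro i
    by_contra hcon
    have hNdvd : N i ∣ d * p ^ k := by
      rw [← hprodN]
      exact Dvd.dvd.mul_left (Finset.dvd_prod_of_mem N (Finset.mem_univ i)) _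
    have hcop : (N i).Coprime (p ^ k) :=
      Nat.Coprime.pow_right _ ((Nat.coprime_comm.mp ((Nat.Prime.coprime_iff_not_dvd hp).mpr hcon)))
    have : N i ∣ d := (Nat.Coprime.dvd_of_dvd_mul_right hcop) hNdvd
    have := Nat.le_of_dvd hd this
    have := hNgt i
    omega
  -- r ≤ k
  have hrk : r ≤ k := by
    have h1 : p ^ r ∣ ∏ i, N i := by
      have := Finset.prod_dvd_prod_of_dvd (s := Finset.univ) (fun _ : Fin r => p) N
        (fun i _ => hpN i)
      simpa [Finset.prod_const] using this
    have h2 : p ^ r ∣ d * p ^ k := dvd_trans h1 ⟨c.natAbs, by rw [← hprodN]; ring⟩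
    have hcop : (p ^ r).Coprime d :=
      Nat.Coprime.pow_left _ ((Nat.Prime.coprime_iff_not_dvd hp).mpr hpd)
    have h3 : p ^ r ∣ p ^ k := (Nat.Coprime.dvd_of_dvd_mul_left hcop) h2
    exact (Nat.pow_dvd_pow_iff_le_right hp.one_lt).mp h3
  -- r ≤ j
  have hrj : r ≤ j := by
    by_contra hcon
    push_neg at hcon
    have hdvd2 : ∀ i ∈ (Finset.univ : Finset (Fin r)), (p:ℤ) ∣ (fs i).eval M := by
      intro i _
      have h1 : (p:ℤ) ∣ ((N i : ℕ) : ℤ) := Int.natCast_dvd_natCast.mpr (hpN i)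
      rw [hN] at h1
      exact Int.dvd_natAbs.mp h1
    have h2 := hasse_dvd_aux (p:ℤ) M Finset.univ fs hdvd2 j (by simpa using hcon)
    apply hcoprime
    have h3 : Polynomial.hasseDeriv j f = C c * Polynomial.hasseDeriv j (∏ i, fs i) := by
      rw [hfact, ← smul_eq_C_mul, ← smul_eq_C_mul, map_smul]
    rw [h3, Polynomial.eval_mul, Polynomial.eval_C]
    exact h2.mul_left c
  omega
end

section
/- Let b ≥ 2 and N ≥ 2 be integers, and let N = a_0 + a_1 b + a_2 b^2 + ⋯ + a_n b^n be the base-b expansion of N, so that 0 ≤ a_i ≤ b−1 for all i and a_n ≥ 1. Then in any factorization of the polynomial f = a_0 + a_1x + ⋯ + a_nx^n as f = c·f_1⋯f_r where c is a nonzero integer and each f_i is a nonconstant irreducible polynomial in ℤ[x], the number of factors satisfies r ≤ Ω(N). -/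
open Polynomial Finset

private lemma geom_aux {t : ℝ} (h0 : 0 ≤ t) (h1 : t < 1) (m : ℕ) :
    ∑ i ∈ Finset.range m, t ^ i ≤ 1 / (1 - t) := by
  have h2 : (0:ℝ) < 1 - t := by linarith
  rw [le_div_iff₀ h2]
  have h3 := geom_sum_mul t m
  nlinarith [pow_nonneg h0 m]

set_option maxHeartbeats 1000000 in
private lemma root_re_lt (b n : ℕ) (hb : 2 ≤ b) (a : ℕ → ℕ)
    (hdig : ∀ i ≤ n, a i ≤ b - 1) (hlead : 1 ≤ a n) (z : ℂ)
    (hz : ∑ i ∈ Finset.range (n + 1), (a i : ℂ) * z ^ i = 0) :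
    z.re < (b : ℝ) - 1/2 := by
  by_contra hre
  push_neg at hre
  have hbR : (2:ℝ) ≤ (b:ℝ) := by exact_mod_cast hb
  have hs : (3/2 : ℝ) ≤ (b:ℝ) - 1/2 := by linarith
  have habs : (b:ℝ) - 1/2 ≤ ‖z‖ := le_trans hre (Complex.re_le_norm z)
  have hz0 : z ≠ 0 := by
    intro h; rw [h] at habs; simp at habs; linarith
  set w : ℂ := z⁻¹ with hw
  have hzw : z * w = 1 := mul_inv_cancel₀ hz0
  set q : ℝ := ‖w‖ with hqdef
  have hq0 : 0 ≤ q := norm_nonneg w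
  have hazpos : 0 < ‖z‖ := norm_pos_iff.mpr hz0
  have hqz : q * ‖z‖ = 1 := by
    rw [hqdef, hw, norm_inv]
    field_simp
  have hqs : q ≤ 1 / ((b:ℝ) - 1/2) := by
    rw [le_div_iff₀ (by linarith)]
    nlinarith
  have hq23 : q ≤ 2/3 := by
    calc q ≤ 1 / ((b:ℝ) - 1/2) := hqs
    _ ≤ 2/3 := by rw [div_le_iff₀ (by linarith)]; linarith
  have hq1 : q < 1 := by linarith
  -- key equation
  have hpow : ∀ i, i ≤ n → z ^ i * w ^ n = w ^ (n - i) := by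
    intro i hi
    calc z ^ i * w ^ n = z ^ i * (w ^ i * w ^ (n - i)) := by
          rw [← pow_add, Nat.add_sub_cancel' hi]
      _ = (z * w) ^ i * w ^ (n - i) := by ring
      _ = w ^ (n - i) := by rw [hzw, one_pow, one_mul]
  have key : (a n : ℂ) + ∑ i ∈ Finset.range n, (a i : ℂ) * w ^ (n - i) = 0 := by
    have h1 : (∑ i ∈ Finset.range (n+1), (a i:ℂ) * z ^ i) * w ^ n = 0 := by
      rw [hz, zero_mul]
    rw [Finset.sum_mul] at h1
    have h2 : ∑ i ∈ Finset.range (n+1), (a i:ℂ) * w ^ (n - i) = 0 := by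
      rw [← h1]
      apply Finset.sum_congr rfl
      intro i hi
      rw [Finset.mem_range, Nat.lt_succ_iff] at hi
      rw [mul_assoc, hpow i hi]
    rw [Finset.sum_range_succ, Nat.sub_self, pow_zero, mul_one] at h2
    rw [add_comm]; exact h2
  have hdigR : ∀ i, i ≤ n → (a i : ℝ) ≤ (b:ℝ) - 1 := by
    intro i hi
    have h := hdig i hi
    have : (a i : ℝ) ≤ ((b - 1 : ℕ) : ℝ) := by exact_mod_cast h
    rwa [Nat.cast_sub (by omega), Nat.cast_one] at this
  -- step (i): |z| ≤ b
  have habs_term : ∀ i ∈ Finset.range n, ‖((a i : ℂ) * w ^ (n - i))‖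
      ≤ ((b:ℝ) - 1) * q ^ (n - i) := by
    intro i hi
    rw [Finset.mem_range] at hi
    rw [norm_mul, norm_pow, Complex.norm_natCast]
    exact mul_le_mul_of_nonneg_right (hdigR i (le_of_lt hi)) (pow_nonneg hq0 _)
  have hzb : ‖z‖ ≤ (b:ℝ) := by
    have h3 : (a n : ℂ) = -∑ i ∈ Finset.range n, (a i : ℂ) * w ^ (n - i) :=
      eq_neg_of_add_eq_zero_left key
    have h4 : (a n : ℝ) ≤ ∑ i ∈ Finset.range n, ((b:ℝ) - 1) * q ^ (n - i) := by
      calc (a n : ℝ) = ‖((a n : ℂ))‖ := by rw [Complex.norm_natCast]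
        _ = ‖(∑ i ∈ Finset.range n, (a i : ℂ) * w ^ (n - i))‖ := by
            rw [h3, norm_neg]
        _ ≤ ∑ i ∈ Finset.range n, ‖((a i : ℂ) * w ^ (n - i))‖ :=
            norm_sum_le _ _
        _ ≤ _ := Finset.sum_le_sum habs_term
    have h5 : ∑ i ∈ Finset.range n, q ^ (n - i) = ∑ j ∈ Finset.range n, q ^ (j + 1) := by
      rw [← Finset.sum_range_reflect (fun j => q ^ (j+1)) n]
      apply Finset.sum_congr rfl
      intro j hj
      rw [Finset.mem_range] at hj
      congr 1
      omega
    have h6 : ∑ j ∈ Finset.range n, q ^ (j + 1) ≤ q * (1 / (1 - q)) := by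
      calc ∑ j ∈ Finset.range n, q ^ (j + 1) = q * ∑ j ∈ Finset.range n, q ^ j := by
            rw [Finset.mul_sum]; apply Finset.sum_congr rfl; intro j _; ring
        _ ≤ q * (1 / (1 - q)) := mul_le_mul_of_nonneg_left (geom_aux hq0 hq1 n) hq0
    have h7 : (1 : ℝ) ≤ (a n : ℝ) := by exact_mod_cast hlead
    have h8 : (a n : ℝ) ≤ ((b:ℝ) - 1) * (q * (1 / (1 - q))) := by
      calc (a n : ℝ) ≤ ∑ i ∈ Finset.range n, ((b:ℝ) - 1) * q ^ (n - i) := h4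
        _ = ((b:ℝ) - 1) * ∑ i ∈ Finset.range n, q ^ (n - i) := by rw [Finset.mul_sum]
        _ = ((b:ℝ) - 1) * ∑ j ∈ Finset.range n, q ^ (j + 1) := by rw [h5]
        _ ≤ _ := mul_le_mul_of_nonneg_left h6 (by linarith)
    -- 1 ≤ (b-1) q / (1-q)  ⟹  1 ≤ b q  ⟹ |z| ≤ b
    have hq1' : (0:ℝ) < 1 - q := by linarith
    have h8' := mul_le_mul_of_nonneg_right (le_trans h7 h8) hq1'.le
    have h8'' : (((b:ℝ) - 1) * (q * (1 / (1 - q)))) * (1 - q) = ((b:ℝ) - 1) * q := by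
      field_simp
    have h9 : 1 - q ≤ ((b:ℝ) - 1) * q := by rw [h8''] at h8'; linarith
    have h10 : 1 ≤ (b:ℝ) * q := by linarith
    nlinarith
  -- step (ii) : Re w ≥ 0, Re (w^2) ≥ 0
  have hns : Complex.normSq z = z.re ^ 2 + z.im ^ 2 := by
    rw [Complex.normSq_apply]; ring
  have hrepos : 0 < z.re := by linarith
  have hnspos : 0 < Complex.normSq z := Complex.normSq_pos.mpr hz0
  have hrew : 0 ≤ w.re := by
    rw [hw, Complex.inv_re]
    positivity
  have him2 : z.im ^ 2 ≤ z.re ^ 2 := by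
    have h1 : z.re ^ 2 + z.im ^ 2 ≤ (b:ℝ) ^ 2 := by
      rw [← hns, ← Complex.sq_norm]
      exact pow_le_pow_left₀ (norm_nonneg z) hzb 2
    nlinarith
  have hrew2 : 0 ≤ (w ^ 2).re := by
    have h1 : w ^ 2 = (z ^ 2)⁻¹ := by rw [hw, inv_pow]
    rw [h1, Complex.inv_re]
    apply div_nonneg _ (Complex.normSq_nonneg _)
    have : (z ^ 2).re = z.re * z.re - z.im * z.im := by
      rw [sq, Complex.mul_re]
    rw [this]; nlinarith
  -- step (iii)
  have keyRe : (a n : ℝ) + ∑ i ∈ Finset.range n, (a i : ℝ) * (w ^ (n - i)).re = 0 := by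
    have := congrArg Complex.re key
    simpa [Complex.add_re, Complex.re_sum, Complex.mul_re] using this
  have h7 : (1 : ℝ) ≤ (a n : ℝ) := by exact_mod_cast hlead
  match n, hdig, hlead, key, keyRe, hdigR with
  | 0, hdig, hlead, key, keyRe, hdigR => simp at keyRe; linarith
  | 1, hdig, hlead, key, keyRe, hdigR =>
    rw [Finset.sum_range_one] at keyRe
    simp only [Nat.sub_zero, pow_one] at keyRe
    have h1 : (0:ℝ) ≤ (a 0 : ℝ) * w.re := mul_nonneg (Nat.cast_nonneg _) hrew
    have h2 : (1 : ℝ) ≤ (a 1 : ℝ) := by exact_mod_cast hlead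
    linarith
  | (m+2), hdig, hlead, key, keyRe, hdigR =>
    rw [Finset.sum_range_succ, Finset.sum_range_succ] at keyRe
    have e1 : m + 2 - (m+1) = 1 := by omega
    have e2 : m + 2 - m = 2 := by omega
    rw [e1, e2] at keyRe
    have hterm1 : (0:ℝ) ≤ (a (m+1) : ℝ) * (w ^ 1).re := by
      rw [pow_one]; exact mul_nonneg (Nat.cast_nonneg _) hrew
    have hterm2 : (0:ℝ) ≤ (a m : ℝ) * (w ^ 2).re := mul_nonneg (Nat.cast_nonneg _) hrew2
    have h7' : (1 : ℝ) ≤ (a (m+2) : ℝ) := by exact_mod_cast hlead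
    have hq1' : (0:ℝ) < 1 - q := by linarith
    have hterm : ∀ i ∈ Finset.range m,
        -(((b:ℝ) - 1) * q ^ (m + 2 - i)) ≤ (a i : ℝ) * (w ^ (m + 2 - i)).re := by
      intro i hi
      rw [Finset.mem_range] at hi
      have habsre := Complex.abs_re_le_norm (w ^ (m + 2 - i))
      rw [norm_pow] at habsre
      have hre1 : -(q ^ (m + 2 - i)) ≤ (w ^ (m + 2 - i)).re := by
        have := neg_abs_le ((w ^ (m + 2 - i)).re)
        linarith
      have hai : (0:ℝ) ≤ (a i : ℝ) := Nat.cast_nonneg _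
      have haib : (a i : ℝ) ≤ (b:ℝ) - 1 := hdigR i (by omega)
      have hqk : (0:ℝ) ≤ q ^ (m + 2 - i) := pow_nonneg hq0 _
      nlinarith [mul_le_mul_of_nonneg_left hre1 hai]
    have hsum : -(((b:ℝ) - 1) * (q ^ 3 * (1 / (1 - q)))) ≤
        ∑ i ∈ Finset.range m, (a i : ℝ) * (w ^ (m + 2 - i)).re := by
      have h1 : ∑ i ∈ Finset.range m, -(((b:ℝ) - 1) * q ^ (m + 2 - i)) ≤
          ∑ i ∈ Finset.range m, (a i : ℝ) * (w ^ (m + 2 - i)).re :=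
        Finset.sum_le_sum hterm
      have h2 : ∑ i ∈ Finset.range m, q ^ (m + 2 - i) = ∑ j ∈ Finset.range m, q ^ (j + 3) := by
        rw [← Finset.sum_range_reflect (fun j => q ^ (j+3)) m]
        apply Finset.sum_congr rfl
        intro j hj
        rw [Finset.mem_range] at hj
        congr 1
        omega
      have h3 : ∑ j ∈ Finset.range m, q ^ (j + 3) ≤ q ^ 3 * (1 / (1 - q)) := by
        calc ∑ j ∈ Finset.range m, q ^ (j + 3) = q ^ 3 * ∑ j ∈ Finset.range m, q ^ j := by
              rw [Finset.mul_sum]; apply Finset.sum_congr rfl; intro j _; ring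
          _ ≤ q ^ 3 * (1 / (1 - q)) :=
              mul_le_mul_of_nonneg_left (geom_aux hq0 hq1 m) (pow_nonneg hq0 3)
      have h4 : ∑ i ∈ Finset.range m, -(((b:ℝ) - 1) * q ^ (m + 2 - i)) =
          -(((b:ℝ) - 1) * ∑ j ∈ Finset.range m, q ^ (j + 3)) := by
        rw [← h2]; simp [Finset.mul_sum]
      rw [h4] at h1
      have h5 : ((b:ℝ) - 1) * ∑ j ∈ Finset.range m, q ^ (j + 3) ≤
          ((b:ℝ) - 1) * (q ^ 3 * (1 / (1 - q))) :=
        mul_le_mul_of_nonneg_left h3 (by linarith)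
      linarith
    have g0 : ((b:ℝ) - 1) * (q ^ 3 * (1 / (1 - q))) ≥ 1 := by linarith
    have g1 : 1 - q ≤ ((b:ℝ) - 1) * q ^ 3 := by
      have := mul_le_mul_of_nonneg_right g0 hq1'.le
      have heq : (((b:ℝ) - 1) * (q ^ 3 * (1 / (1 - q)))) * (1 - q) = ((b:ℝ) - 1) * q ^ 3 := by
        field_simp
      nlinarith
    have g2 : q ^ 3 * (2*(b:ℝ) - 1) ^ 3 ≤ 8 := by
      have hqs' : q * ((b:ℝ) - 1/2) ≤ 1 := by nlinarith
      have hqb : q * (2*(b:ℝ) - 1) ≤ 2 := by nlinarith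
      have hqbnn : (0:ℝ) ≤ q * (2*(b:ℝ) - 1) := mul_nonneg hq0 (by linarith)
      calc q ^ 3 * (2*(b:ℝ) - 1) ^ 3 = (q * (2*(b:ℝ) - 1)) ^ 3 := by ring
        _ ≤ 2 ^ 3 := pow_le_pow_left₀ hqbnn hqb 3
        _ = 8 := by norm_num
    have g3 : (1:ℝ)/3 ≤ 1 - q := by linarith
    have g4 : (1/3 : ℝ) * (2*(b:ℝ) - 1)^3 ≤ 8 * ((b:ℝ) - 1) := by
      have c1 : ((b:ℝ) - 1) * (q ^ 3 * (2*(b:ℝ) - 1)^3) ≤ ((b:ℝ) - 1) * 8 :=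
        mul_le_mul_of_nonneg_left g2 (by linarith)
      have c2 : (1/3 : ℝ) * (2*(b:ℝ) - 1)^3 ≤ (((b:ℝ) - 1) * q ^ 3) * (2*(b:ℝ) - 1)^3 := by
        exact mul_le_mul_of_nonneg_right (by linarith)
          (pow_nonneg (by linarith : (0:ℝ) ≤ 2*(b:ℝ)-1) 3)
      nlinarith
    nlinarith [g4, hbR, mul_nonneg (show (0:ℝ) ≤ (b:ℝ)-2 by linarith)
      (show (0:ℝ) ≤ 8*(b:ℝ)^2+4*(b:ℝ)-10 by nlinarith)]

private lemma abs_multiset_prod (s : Multiset ℂ) :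
    ‖s.prod‖ = (s.map (fun z => ‖z‖)).prod := by
  induction s using Multiset.induction with
  | empty => simp
  | cons x t ih => simp [norm_mul, ih]

private lemma multiset_map_prod_lt (s : Multiset ℂ) (hs : s ≠ 0) (φ ψ : ℂ → ℝ)
    (h0 : ∀ z ∈ s, 0 ≤ φ z) (hlt : ∀ z ∈ s, φ z < ψ z) :
    (s.map φ).prod < (s.map ψ).prod := by
  induction s using Multiset.induction with
  | empty => exact absurd rfl hs
  | cons x t ih =>
    rcases eq_or_ne t 0 with rfl | ht
    · simpa using hlt x (Multiset.mem_cons_self x 0)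
    · simp only [Multiset.map_cons, Multiset.prod_cons]
      have hφt : 0 ≤ (t.map φ).prod := by
        apply Multiset.prod_nonneg
        intro r hr
        rcases Multiset.mem_map.1 hr with ⟨z, hz, rfl⟩
        exact h0 z (Multiset.mem_cons_of_mem hz)
      exact mul_lt_mul'' (hlt x (Multiset.mem_cons_self x t))
        (ih ht (fun z hz => h0 z (Multiset.mem_cons_of_mem hz))
          (fun z hz => hlt z (Multiset.mem_cons_of_mem hz)))
        (h0 x (Multiset.mem_cons_self x t)) hφt

private lemma factor_two_le (b n : ℕ) (hb : 2 ≤ b) (a : ℕ → ℕ)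
    (hdig : ∀ i ≤ n, a i ≤ b - 1) (hlead : 1 ≤ a n)
    (g : Polynomial ℤ)
    (hg : g ∣ ∑ i ∈ Finset.range (n + 1), C (a i : ℤ) * X ^ i)
    (hdeg : 0 < g.natDegree) : 2 ≤ (g.eval (b:ℤ)).natAbs := by
  set f : Polynomial ℤ := ∑ i ∈ Finset.range (n + 1), C (a i : ℤ) * X ^ i with hf
  have hevalf : ∀ x : ℤ, f.eval x = ∑ i ∈ Finset.range (n + 1), (a i : ℤ) * x ^ i := by
    intro x; simp [hf, eval_finset_sum]
  -- f(b-1) > 0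
  have hfb1 : 0 < f.eval ((b:ℤ) - 1) := by
    rw [hevalf]
    have h1 : ((a n : ℤ)) * ((b:ℤ) - 1) ^ n ≤
        ∑ i ∈ Finset.range (n + 1), (a i : ℤ) * ((b:ℤ) - 1) ^ i := by
      apply Finset.single_le_sum (f := fun i => (a i : ℤ) * ((b:ℤ) - 1) ^ i)
      · intro i _
        exact mul_nonneg (Int.natCast_nonneg _) (pow_nonneg (by omega) _)
      · exact Finset.self_mem_range_succ n
    have h2 : (1:ℤ) ≤ ((a n : ℤ)) * ((b:ℤ) - 1) ^ n := by
      have ha : (1:ℤ) ≤ (a n : ℤ) := by exact_mod_cast hlead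
      have hbp : (1:ℤ) ≤ ((b:ℤ) - 1) ^ n := one_le_pow₀ (by omega)
      nlinarith
    omega
  have hgb1 : g.eval ((b:ℤ) - 1) ≠ 0 := by
    intro h
    have := Polynomial.eval_dvd (x := (b:ℤ) - 1) hg
    rw [h] at this
    rw [zero_dvd_iff] at this
    omega
  have hg0 : g ≠ 0 := by
    intro h; rw [h] at hgb1; simp at hgb1
  -- map to ℂ
  set G : Polynomial ℂ := g.map (Int.castRingHom ℂ) with hG
  have hinj : Function.Injective (Int.castRingHom ℂ) := Int.cast_injective
  have hGdeg : G.natDegree = g.natDegree := Polynomial.natDegree_map_eq_of_injective hinj g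
  have hG0 : G ≠ 0 := by
    rw [hG, Ne, Polynomial.map_eq_zero_iff hinj]
    exact hg0
  have hroots : Multiset.card G.roots = G.natDegree :=
    (Polynomial.splits_iff_card_roots).1 (IsAlgClosed.splits G)
  have hGfact := Polynomial.C_leadingCoeff_mul_prod_multiset_X_sub_C hroots
  -- roots of G are roots of the digit polynomial
  have hrootRe : ∀ z ∈ G.roots, z.re < (b:ℝ) - 1/2 := by
    intro z hz
    have hGz : G.eval z = 0 := (Polynomial.isRoot_of_mem_roots hz)
    have hFz : (f.map (Int.castRingHom ℂ)).eval z = 0 := by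
      have hdvd : G ∣ f.map (Int.castRingHom ℂ) := Polynomial.map_dvd _ hg
      have := Polynomial.eval_dvd (x := z) hdvd
      rw [hGz, zero_dvd_iff] at this
      exact this
    have hsum : ∑ i ∈ Finset.range (n + 1), (a i : ℂ) * z ^ i = 0 := by
      rw [← hFz, hf]
      simp [Polynomial.map_sum, Polynomial.eval_finset_sum]
    exact root_re_lt b n hb a hdig hlead z hsum
  -- eval formula
  have hevalG : ∀ x : ℂ, ‖(G.eval x)‖ =
      ‖G.leadingCoeff‖ * (G.roots.map (fun z => ‖(x - z)‖)).prod := by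
    intro x
    conv_lhs => rw [← hGfact]
    rw [Polynomial.eval_mul, Polynomial.eval_C, norm_mul, Polynomial.eval_multiset_prod,
      Multiset.map_map, abs_multiset_prod, Multiset.map_map]
    congr 1
    refine congrArg (fun (m : Multiset ℝ) => m.prod) (Multiset.map_congr rfl ?_)
    intro zz _
    simp [Function.comp]
  have hlc : 1 ≤ ‖G.leadingCoeff‖ := by
    have hlc0 : g.leadingCoeff ≠ 0 := Polynomial.leadingCoeff_ne_zero.mpr hg0
    have h1 : G.leadingCoeff = ((g.leadingCoeff : ℤ) : ℂ) := by
      rw [hG, Polynomial.leadingCoeff_map_of_leadingCoeff_ne_zero]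
      · rfl
      · simpa using hlc0
    rw [h1, Complex.norm_intCast]
    exact_mod_cast Int.one_le_abs hlc0
  have hcard : Multiset.card G.roots = g.natDegree := by rw [hroots, hGdeg]
  have hne : G.roots ≠ 0 := by
    intro h; rw [h] at hcard; simp at hcard; omega
  have hbR : (2:ℝ) ≤ (b:ℝ) := by exact_mod_cast hb
  have hperroot : ∀ z ∈ G.roots,
      (fun z => ‖((b:ℂ) - 1 - z)‖) z < (fun z => ‖((b:ℂ) - z)‖) z := by
    intro z hz
    simp only
    have hre := hrootRe z hz
    have hure : ((b:ℂ) - z).re = (b:ℝ) - z.re := by simp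
    have e1 : (((b:ℂ) - 1 - z).re) = ((b:ℂ) - z).re - 1 := by simp; ring
    have e2 : (((b:ℂ) - 1 - z).im) = ((b:ℂ) - z).im := by simp
    have h1 : Complex.normSq ((b:ℂ) - 1 - z) < Complex.normSq ((b:ℂ) - z) := by
      rw [Complex.normSq_apply, Complex.normSq_apply, e1, e2]
      have hhalf : (1/2 : ℝ) < ((b:ℂ) - z).re := by rw [hure]; linarith
      nlinarith
    nlinarith [Complex.sq_norm ((b:ℂ) - 1 - z), Complex.sq_norm ((b:ℂ) - z),
      norm_nonneg ((b:ℂ) - 1 - z), norm_nonneg ((b:ℂ) - z), h1]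
  have hprodlt : (G.roots.map (fun z => ‖((b:ℂ) - 1 - z)‖)).prod <
      (G.roots.map (fun z => ‖((b:ℂ) - z)‖)).prod :=
    multiset_map_prod_lt _ hne _ _ (fun z _ => norm_nonneg _) hperroot
  have hev1 : G.eval ((b:ℂ) - 1) = ((g.eval ((b:ℤ) - 1) : ℤ) : ℂ) := by
    have h := Polynomial.eval_intCast_map (Int.castRingHom ℂ) g ((b:ℤ) - 1)
    rw [hG]
    convert h using 2 <;> push_cast <;> rfl
  have hev2 : G.eval ((b:ℕ):ℂ) = ((g.eval ((b:ℤ)) : ℤ) : ℂ) := by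
    have h := Polynomial.eval_intCast_map (Int.castRingHom ℂ) g ((b:ℤ))
    rw [hG]
    convert h using 2 <;> push_cast <;> rfl
  have habs1 : (1:ℝ) ≤ ‖(G.eval ((b:ℂ) - 1))‖ := by
    rw [hev1, Complex.norm_intCast]
    exact_mod_cast Int.one_le_abs hgb1
  have hlcpos : 0 < ‖G.leadingCoeff‖ := lt_of_lt_of_le one_pos hlc
  have hlt : ‖(G.eval ((b:ℂ) - 1))‖ < ‖(G.eval ((b:ℕ):ℂ))‖ := by
    rw [hevalG ((b:ℂ) - 1), hevalG ((b:ℕ):ℂ)]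
    exact mul_lt_mul_of_pos_left hprodlt hlcpos
  have hfinal : (1:ℝ) < ‖(G.eval ((b:ℕ):ℂ))‖ := lt_of_le_of_lt habs1 hlt
  rw [hev2, Complex.norm_intCast] at hfinal
  have h2 : (1:ℤ) < |g.eval (b:ℤ)| := by exact_mod_cast hfinal
  rw [Int.abs_eq_natAbs] at h2
  exact_mod_cast h2

private lemma natAbs_prod {ι : Type*} (s : Finset ι) (v : ι → ℤ) :
    (∏ i ∈ s, v i).natAbs = ∏ i ∈ s, (v i).natAbs := by
  induction s using Finset.cons_induction with
  | empty => simp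
  | cons i s hi ih => rw [Finset.prod_cons, Finset.prod_cons, Int.natAbs_mul, ih]

private lemma omega_prod {ι : Type*} (s : Finset ι) (v : ι → ℕ) (h : ∀ i ∈ s, v i ≠ 0) :
    ArithmeticFunction.cardFactors (∏ i ∈ s, v i) =
      ∑ i ∈ s, ArithmeticFunction.cardFactors (v i) := by
  induction s using Finset.cons_induction with
  | empty => simp
  | cons i s hi ih =>
    rw [Finset.prod_cons, Finset.sum_cons,
      ArithmeticFunction.cardFactors_mul (h i (Finset.mem_cons_self i s))
        (Finset.prod_ne_zero_iff.2 fun j hj => h j (Finset.mem_cons_of_mem hj)),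
      ih (fun j hj => h j (Finset.mem_cons_of_mem hj))]

private lemma one_le_omega {m : ℕ} (hm : 2 ≤ m) : 1 ≤ ArithmeticFunction.cardFactors m := by
  rw [ArithmeticFunction.cardFactors_apply]
  refine List.length_pos_iff.mpr ?_
  rw [Ne, Nat.primeFactorsList_eq_nil]
  omega

/-- If `N = a_0 + a_1 b + ⋯ + a_n bⁿ` is the base-`b` expansion of `N ≥ 2`
(`b ≥ 2`), then any factorization of `f = a_0 + a_1 x + ⋯ + a_n xⁿ` into nonconstant
irreducibles in `ℤ[x]` has at most `Ω(N)` factors. -/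
theorem stmt_3 (b N n : ℕ) (hb : 2 ≤ b) (hN : 2 ≤ N) (a : ℕ → ℕ)
    (hdig : ∀ i ≤ n, a i ≤ b - 1) (hlead : 1 ≤ a n)
    (hexp : N = ∑ i ∈ Finset.range (n + 1), a i * b ^ i)
    (c : ℤ) (hc : c ≠ 0) (r : ℕ) (fs : Fin r → Polynomial ℤ)
    (hirr : ∀ i, Irreducible (fs i)) (hnc : ∀ i, 0 < (fs i).natDegree)
    (hfact : (∑ i ∈ Finset.range (n + 1), C (a i : ℤ) * X ^ i) = C c * ∏ i, fs i) :
    r ≤ ArithmeticFunction.cardFactors N := by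
  have hevalN : Polynomial.eval (b:ℤ) (∑ i ∈ Finset.range (n + 1), C (a i : ℤ) * X ^ i)
      = (N:ℤ) := by
    have h1 : (N:ℤ) = ∑ i ∈ Finset.range (n+1), (a i : ℤ) * (b:ℤ) ^ i := by
      rw [hexp]; push_cast; ring
    rw [h1]
    simp [Polynomial.eval_finset_sum]
  have hNfact : (N:ℤ) = c * ∏ i, (fs i).eval (b:ℤ) := by
    rw [← hevalN, hfact, Polynomial.eval_mul, Polynomial.eval_C, Polynomial.eval_prod]
  have hdvd : ∀ i, fs i ∣ (∑ i ∈ Finset.range (n + 1), C (a i : ℤ) * X ^ i) := by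
    intro i
    rw [hfact]
    exact Dvd.dvd.mul_left (Finset.dvd_prod_of_mem fs (Finset.mem_univ i)) (C c)
  have hv2 : ∀ i, 2 ≤ ((fs i).eval (b:ℤ)).natAbs := fun i =>
    factor_two_le b n hb a hdig hlead (fs i) (hdvd i) (hnc i)
  have hN' : N = c.natAbs * ∏ i, ((fs i).eval (b:ℤ)).natAbs := by
    have h1 : N = ((N:ℤ)).natAbs := (Int.natAbs_natCast N).symm
    rw [h1, hNfact, Int.natAbs_mul, natAbs_prod]
  have hc' : c.natAbs ≠ 0 := Int.natAbs_ne_zero.mpr hc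
  have hprodne : (∏ i, ((fs i).eval (b:ℤ)).natAbs) ≠ 0 :=
    Finset.prod_ne_zero_iff.2 fun i _ => by have := hv2 i; omega
  have hceq : ArithmeticFunction.cardFactors N =
      ArithmeticFunction.cardFactors c.natAbs +
        ArithmeticFunction.cardFactors (∏ i, ((fs i).eval (b:ℤ)).natAbs) := by
    rw [hN', ArithmeticFunction.cardFactors_mul hc' hprodne]
  calc r = ∑ _i : Fin r, 1 := by simp
    _ ≤ ∑ i : Fin r, ArithmeticFunction.cardFactors (((fs i).eval (b:ℤ)).natAbs) :=
        Finset.sum_le_sum fun i _ => one_le_omega (hv2 i)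
    _ = ArithmeticFunction.cardFactors (∏ i, ((fs i).eval (b:ℤ)).natAbs) :=
        (omega_prod Finset.univ _ fun i _ => by have := hv2 i; omega).symm
    _ ≤ ArithmeticFunction.cardFactors N := by rw [hceq]; exact Nat.le_add_left _ _
end

section
/- Let f = a_0 + a_1x + ⋯ + a_nx^n ∈ ℤ[x] be a polynomial of degree n ≥ 1 with a_n ≠ 0, and set H_f = max_{0 ≤ i ≤ n−1} |a_i|/|a_n|. If f(m) is a prime number for some integer m ≥ H_f + 2, then f cannot be written as a product of two nonconstant polynomials with integer coefficients. -/
open Polynomial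

private lemma one_le_multiset_prod (s : Multiset ℝ) (h : ∀ x ∈ s, 1 ≤ x) : 1 ≤ s.prod := by
  induction s using Multiset.induction with
  | empty => simp
  | cons a s ih =>
    simp only [Multiset.prod_cons]
    have ha := h a (Multiset.mem_cons_self a s)
    have hs := ih (fun x hx => h x (Multiset.mem_cons_of_mem hx))
    nlinarith

private lemma murty_aux (f : Polynomial ℤ) (n : ℕ) (hn : 1 ≤ n) (hdeg : f.natDegree = n)
    (H : ℝ) (hcoeff : ∀ i < n, |((f.coeff i : ℤ) : ℝ)| ≤ H * |((f.coeff n : ℤ) : ℝ)|)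
    (hH0 : 0 ≤ H)
    (m : ℤ) (hm : H + 2 ≤ (m : ℝ)) (q : Polynomial ℤ) (hq : 0 < q.natDegree)
    (hqf : q ∣ f) : 1 < |q.eval m| := by
  have hf0 : f ≠ 0 := fun h => by simp [h] at hdeg; omega
  have han : f.coeff n ≠ 0 := by
    rw [← hdeg]; exact Polynomial.leadingCoeff_ne_zero.mpr hf0
  have hAr : (0:ℝ) < |((f.coeff n : ℤ) : ℝ)| := abs_pos.mpr (by exact_mod_cast han)
  -- root bound: every complex root z of f satisfies ‖z‖ < m - 1
  have key : ∀ z : ℂ, (Polynomial.aeval z) f = 0 → 1 < ‖(m:ℂ) - z‖ := by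
    intro z hz
    have hrlt : ‖z‖ < (m:ℝ) - 1 := by
      by_contra hcon
      push_neg at hcon
      set r : ℝ := ‖z‖ with hr
      have hr1 : H + 1 ≤ r := by linarith
      have hr1' : (1:ℝ) ≤ r := by linarith
      rw [Polynomial.aeval_eq_sum_range, hdeg, Finset.sum_range_succ] at hz
      have heq : (f.coeff n : ℂ) * z ^ n = -∑ i ∈ Finset.range n, (f.coeff i : ℂ) * z ^ i := by
        simp only [zsmul_eq_mul] at hz
        linear_combination hz
      have hnorm : |((f.coeff n : ℤ) : ℝ)| * r ^ n ≤
          ∑ i ∈ Finset.range n, |((f.coeff i : ℤ) : ℝ)| * r ^ i := by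
        calc |((f.coeff n : ℤ) : ℝ)| * r ^ n = ‖(f.coeff n : ℂ) * z ^ n‖ := by
              rw [norm_mul, norm_pow, Complex.norm_intCast]
          _ = ‖∑ i ∈ Finset.range n, (f.coeff i : ℂ) * z ^ i‖ := by rw [heq, norm_neg]
          _ ≤ ∑ i ∈ Finset.range n, ‖(f.coeff i : ℂ) * z ^ i‖ := norm_sum_le _ _
          _ = ∑ i ∈ Finset.range n, |((f.coeff i : ℤ) : ℝ)| * r ^ i := by
              refine Finset.sum_congr rfl fun i _ => ?_
              rw [norm_mul, norm_pow, Complex.norm_intCast]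
      have hnorm2 : |((f.coeff n : ℤ) : ℝ)| * r ^ n ≤
          H * |((f.coeff n : ℤ) : ℝ)| * ∑ i ∈ Finset.range n, r ^ i := by
        rw [Finset.mul_sum]
        refine hnorm.trans (Finset.sum_le_sum fun i hi => ?_)
        have h1 := hcoeff i (Finset.mem_range.mp hi)
        have hri : (0:ℝ) ≤ r ^ i := by positivity
        nlinarith
      have hdiv : r ^ n ≤ H * ∑ i ∈ Finset.range n, r ^ i := by
        have h2 := mul_le_mul_of_nonneg_left hnorm2 (le_of_lt (inv_pos.mpr hAr))
        rw [show |((f.coeff n : ℤ) : ℝ)|⁻¹ * (|((f.coeff n : ℤ) : ℝ)| * r ^ n)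
            = r ^ n by field_simp] at h2
        rw [show |((f.coeff n : ℤ) : ℝ)|⁻¹ * (H * |((f.coeff n : ℤ) : ℝ)| *
            ∑ i ∈ Finset.range n, r ^ i) = H * ∑ i ∈ Finset.range n, r ^ i by
          field_simp] at h2
        exact h2
      have hrn1 : (1:ℝ) ≤ r ^ n := one_le_pow₀ hr1'
      rcases eq_or_lt_of_le hH0 with hH | hH
      · have hsum0 : (0:ℝ) ≤ ∑ i ∈ Finset.range n, r ^ i :=
          Finset.sum_nonneg fun i _ => by positivity
        nlinarith
      · have hrgt1 : (1:ℝ) < r := by linarith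
        rw [geom_sum_eq (ne_of_gt hrgt1) n, ← mul_div_assoc] at hdiv
        rw [le_div_iff₀ (by linarith : (0:ℝ) < r - 1)] at hdiv
        have h4 : H * r ^ n ≤ (r - 1) * r ^ n :=
          mul_le_mul_of_nonneg_right (by linarith) (by positivity)
        nlinarith
    have h5 : |(m:ℝ)| - ‖z‖ ≤ ‖(m:ℂ) - z‖ := by
      simpa [Complex.norm_intCast] using norm_sub_norm_le (m:ℂ) z
    have habs : |(m:ℝ)| = (m:ℝ) := abs_of_pos (by linarith)
    linarith
  -- now evaluate q over ℂ
  have hq0 : q ≠ 0 := fun h => by simp [h] at hq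
  set qC := q.map (Int.castRingHom ℂ) with hqC
  have hinj : Function.Injective (Int.castRingHom ℂ) := Int.cast_injective
  have hqC0 : qC ≠ 0 := by
    simpa [hqC, Polynomial.map_eq_zero_iff hinj] using hq0
  have hdegC : qC.natDegree = q.natDegree := q.natDegree_map_eq_of_injective hinj
  have hsplit : qC.Splits := IsAlgClosed.splits _
  have heqprod := hsplit.eq_prod_roots
  have hcard : qC.roots.card = q.natDegree := by
    rw [← hdegC]; exact (Polynomial.splits_iff_card_roots.mp hsplit)
  have hroot : ∀ a ∈ qC.roots, 1 < ‖(m:ℂ) - a‖ := by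
    intro a ha
    have h6 : qC.eval a = 0 := (Polynomial.isRoot_of_mem_roots ha)
    have h7 : (Polynomial.aeval a) q = 0 := by
      rwa [Polynomial.aeval_def, ← Polynomial.eval_map]
    obtain ⟨w, hw⟩ := hqf
    refine key a ?_
    rw [hw, map_mul, h7, zero_mul]
  have heval : qC.eval (m:ℂ) =
      qC.leadingCoeff * ((qC.roots).map (fun a => (m:ℂ) - a)).prod := by
    conv_lhs => rw [heqprod]
    simp [Polynomial.eval_multiset_prod, Multiset.map_map]
  have hlead : (1:ℝ) ≤ ‖qC.leadingCoeff‖ := by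
    have : qC.leadingCoeff = ((q.leadingCoeff : ℤ) : ℂ) := by
      rw [hqC, Polynomial.leadingCoeff_map_of_injective hinj]; rfl
    rw [this, Complex.norm_intCast]
    have : (1:ℤ) ≤ |q.leadingCoeff| := Int.one_le_abs (Polynomial.leadingCoeff_ne_zero.mpr hq0)
    exact_mod_cast (by push_cast; exact_mod_cast this : (1:ℝ) ≤ ((|q.leadingCoeff| : ℤ) : ℝ))
  have hprod : 1 < ((qC.roots).map (fun a => ‖(m:ℂ) - a‖)).prod := by
    have hone : ∀ x ∈ (qC.roots).map (fun a => ‖(m:ℂ) - a‖), (1:ℝ) ≤ x := by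
      intro x hx
      obtain ⟨a, ha, rfl⟩ := Multiset.mem_map.mp hx
      exact le_of_lt (hroot a ha)
    have hcard0 : 0 < qC.roots.card := by omega
    obtain ⟨a, ha⟩ := Multiset.card_pos_iff_exists_mem.mp hcard0
    obtain ⟨t, ht⟩ := Multiset.exists_cons_of_mem ha
    rw [ht, Multiset.map_cons, Multiset.prod_cons]
    have h8 : 1 ≤ (t.map (fun a => ‖(m:ℂ) - a‖)).prod := by
      refine one_le_multiset_prod _ fun x hx => ?_
      refine hone x ?_
      rw [ht, Multiset.map_cons]
      exact Multiset.mem_cons_of_mem hx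
    nlinarith [hroot a ha]
  have hnormeval : 1 < ‖qC.eval (m:ℂ)‖ := by
    rw [heval, norm_mul]
    have h9 : ‖((qC.roots).map (fun a => (m:ℂ) - a)).prod‖ =
        ((qC.roots).map (fun a => ‖(m:ℂ) - a‖)).prod := by
      have := map_multiset_prod (normHom.toMonoidHom : ℂ →* ℝ)
        ((qC.roots).map (fun a => (m:ℂ) - a))
      simpa [Multiset.map_map, Function.comp] using this
    rw [h9]
    nlinarith
  have hfin : qC.eval (m:ℂ) = ((q.eval m : ℤ) : ℂ) := by
    rw [hqC]
    exact_mod_cast Polynomial.eval_intCast_map (Int.castRingHom ℂ) q m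
  rw [hfin, Complex.norm_intCast] at hnormeval
  exact_mod_cast (by push_cast at hnormeval ⊢; exact_mod_cast hnormeval :
    (1:ℝ) < ((|q.eval m| : ℤ) : ℝ))

/-- Murty's irreducibility criterion. If `f(m)` is a prime number for some
integer `m ≥ H_f + 2`, then `f` is not a product of two nonconstant integer polynomials. -/
theorem stmt_9 (f : Polynomial ℤ) (n : ℕ) (hn : 1 ≤ n) (hdeg : f.natDegree = n)
    (m : ℤ)
    (hm : ((Finset.range n).sup' (Finset.nonempty_range_iff.mpr (by omega))
        (fun i => (|f.coeff i| : ℝ) / |f.coeff n|)) + 2 ≤ (m : ℝ))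
    (hprime : ∃ p : ℕ, p.Prime ∧ f.eval m = (p : ℤ)) :
    ¬ ∃ g h : Polynomial ℤ, 0 < g.natDegree ∧ 0 < h.natDegree ∧ f = g * h := by
  obtain ⟨p, hp, hpm⟩ := hprime
  rintro ⟨g, h, hg, hh, hf⟩
  set H : ℝ := ((Finset.range n).sup' (Finset.nonempty_range_iff.mpr (by omega))
        (fun i => (|f.coeff i| : ℝ) / |f.coeff n|)) with hH
  have hf0 : f ≠ 0 := fun h => by simp [h] at hdeg; omega
  have han : f.coeff n ≠ 0 := by
    rw [← hdeg]; exact Polynomial.leadingCoeff_ne_zero.mpr hf0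
  have hAr : (0:ℝ) < ((|f.coeff n| : ℤ) : ℝ) := by exact_mod_cast abs_pos.mpr han
  have hH0 : 0 ≤ H := by
    have h0 : (0:ℝ) ≤ |((f.coeff 0 : ℤ) : ℝ)| / ((|f.coeff n| : ℤ) : ℝ) := by positivity
    have h1 := Finset.le_sup' (fun i => (|f.coeff i| : ℝ) / |f.coeff n|)
      (Finset.mem_range.mpr (by omega : 0 < n))
    exact h0.trans h1
  have hcoeff : ∀ i < n, |((f.coeff i : ℤ) : ℝ)| ≤ H * |((f.coeff n : ℤ) : ℝ)| := by
    intro i hi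
    have h1 := Finset.le_sup' (fun i => (|f.coeff i| : ℝ) / |f.coeff n|)
      (Finset.mem_range.mpr hi)
    rw [← hH] at h1
    rw [div_le_iff₀ hAr] at h1
    push_cast at h1 ⊢
    linarith
  have h1 : 1 < |g.eval m| := murty_aux f n hn hdeg H hcoeff hH0 m hm g hg ⟨h, hf⟩
  have h2 : 1 < |h.eval m| := murty_aux f n hn hdeg H hcoeff hH0 m hm h hh
    ⟨g, by rw [hf, mul_comm]⟩
  have hmul : g.eval m * h.eval m = (p:ℤ) := by rw [← Polynomial.eval_mul, ← hf, hpm]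
  have hp2 := hp.two_le
  rw [Int.abs_eq_natAbs] at h1 h2
  have h1' : 2 ≤ (g.eval m).natAbs := by omega
  have h2' : 2 ≤ (h.eval m).natAbs := by omega
  have hmulN : (g.eval m).natAbs * (h.eval m).natAbs = p := by
    rw [← Int.natAbs_mul, hmul]; simp
  rcases hp.eq_one_or_self_of_dvd _ ⟨_, hmulN.symm⟩ with h' | h'
  · omega
  · nlinarith
end
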